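/- Concatenation construction of the HN filtration: if M₁ ⊆ M is the maximal destabilizing subrepresentation of M and 0 ⊂ N₁ ⊂ ... ⊂ N_s = M/M₁ is a Harder-Narasimhan filtration of M/M₁, then the filtration 0 ⊂ M₁ ⊂ π^{-1}(N₁) ⊂ ... ⊂ π^{-1}(N_{s-1}) ⊂ M (where π : M → M/M₁ is the projection) is a Harder-Narasimhan filtration of M, provided μ(M₁) > μ(N₁). -/

import Mathlib

open Finset

/-- A subrepresentation of a fixed representation `M` of a quiver with vertex set `V`,
arrow set `E`, source/target maps `src tgt : E → V` and structure maps `f`. -/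
structure Subrep {k V E : Type} [Field k] (M : V → Type) [∀ v, AddCommGroup (M v)]
    [∀ v, Module k (M v)] (src tgt : E → V) (f : ∀ e, M (src e) →ₗ[k] M (tgt e)) : Type where
  N : ∀ v, Submodule k (M v)
  compat : ∀ e, (N (src e)).map (f e) ≤ N (tgt e)

namespace Subrep

variable {k V E : Type} [Field k] [Fintype V] {M : V → Type}
  [∀ v, AddCommGroup (M v)] [∀ v, Module k (M v)] [∀ v, FiniteDimensional k (M v)]
  {src tgt : E → V} {f : ∀ e, M (src e) →ₗ[k] M (tgt e)}

instance : PartialOrder (Subrep M src tgt f) :=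
  PartialOrder.lift Subrep.N (fun A B h => by cases A; cases B; simpa using h)

/-- The zero subrepresentation. -/
def bot : Subrep M src tgt f := ⟨fun _ => ⊥, fun e => by simp⟩

/-- The whole representation `M` as a subrepresentation of itself. -/
def top : Subrep M src tgt f := ⟨fun _ => ⊤, fun e => le_top⟩

/-- Sum of two subrepresentations. -/
def sup (A B : Subrep M src tgt f) : Subrep M src tgt f :=
  ⟨fun v => A.N v ⊔ B.N v, fun e => by
    rw [Submodule.map_sup]
    exact sup_le_sup (A.compat e) (B.compat e)⟩

/-- `tot c A = ∑_v c_v · dim A_v`; gives `Θ(A)` resp. `σ(A)` for `c = Θ` resp. `σ`. -/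
noncomputable def tot (c : V → ℤ) (A : Subrep M src tgt f) : ℤ :=
  ∑ v, c v * (Module.finrank k (A.N v) : ℤ)

/-- The slope `μ(A) = Θ(A)/σ(A)` as a rational number. -/
noncomputable def slope (Θ σ : V → ℤ) (A : Subrep M src tgt f) : ℚ :=
  (tot Θ A : ℚ) / (tot σ A : ℚ)

/-- The slope of the quotient `B/A` for `A ≤ B`. -/
noncomputable def quotSlope (Θ σ : V → ℤ) (A B : Subrep M src tgt f) : ℚ :=
  ((tot Θ B - tot Θ A : ℤ) : ℚ) / ((tot σ B - tot σ A : ℤ) : ℚ)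

/-- `(Θ,σ)`-semistability of the subrepresentation `A`, viewed as a representation itself:
every nonzero proper subrepresentation of `A` has slope at most `μ(A)`. -/
def Semistable (Θ σ : V → ℤ) (A : Subrep M src tgt f) : Prop :=
  ∀ B : Subrep M src tgt f, B ≤ A → B ≠ bot → B ≠ A → slope Θ σ B ≤ slope Θ σ A

/-- `(Θ,σ)`-semistability of the quotient representation `B/A`, expressed via the
correspondence between subrepresentations of `B/A` and subrepresentations `P` with
`A ≤ P ≤ B`. -/
def QuotSemistable (Θ σ : V → ℤ) (A B : Subrep M src tgt f) : Prop :=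
  ∀ P : Subrep M src tgt f, A ≤ P → P ≤ B → P ≠ A → quotSlope Θ σ A P ≤ quotSlope Θ σ A B

/-- `F` (indexed by `ℕ`, constant equal to `⊤` from `n+1` on) is a Harder–Narasimhan
filtration `0 = F 0 ⊂ F 1 ⊂ ⋯ ⊂ F (n+1) = M` : successive quotients have strictly
decreasing slopes and are `(Θ,σ)`-semistable. -/
def IsHNFiltration (Θ σ : V → ℤ) (n : ℕ) (F : ℕ → Subrep M src tgt f) : Prop :=
  F 0 = bot ∧ (∀ i, n + 1 ≤ i → F i = top) ∧
  (∀ i ≤ n, F i < F (i+1)) ∧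
  (∀ i, i + 1 ≤ n → quotSlope Θ σ (F (i+1)) (F (i+2)) < quotSlope Θ σ (F i) (F (i+1))) ∧
  (∀ i ≤ n, QuotSemistable Θ σ (F i) (F (i+1)))

end Subrep

/-! Apart from index bookkeeping, the only point is the semistability of the first quotient
`M₁ / 0`: every nonzero subrepresentation of `M₁` is a nonzero subrepresentation of `M`, so its
slope is at most `μ(M₁)` by maximality of the slope of `M₁`. -/

namespace Subrep

variable {k V E : Type} [Field k] {M : V → Type}
  [∀ v, AddCommGroup (M v)] [∀ v, Module k (M v)]
  {src tgt : E → V} {f : ∀ e, M (src e) →ₗ[k] M (tgt e)}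

theorem bot_le (A : Subrep M src tgt f) : bot ≤ A :=
  fun _ => _root_.bot_le

theorem bot_lt_of_ne_bot {A : Subrep M src tgt f} (hA : A ≠ bot) : bot < A :=
  lt_of_le_of_ne (bot_le A) hA.symm

theorem tot_bot [Fintype V] (c : V → ℤ) : tot c (bot : Subrep M src tgt f) = 0 :=
  Finset.sum_eq_zero fun v _ => by
    rw [show Module.finrank k ((bot : Subrep M src tgt f).N v) = 0 from finrank_bot k (M v),
      Nat.cast_zero, mul_zero]

theorem quotSlope_bot [Fintype V] (Θ σ : V → ℤ) (A : Subrep M src tgt f) :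
    quotSlope Θ σ bot A = slope Θ σ A := by
  simp [quotSlope, slope, tot_bot]

theorem quotSemistable_bot_of_slope_le [Fintype V] {Θ σ : V → ℤ} {A : Subrep M src tgt f}
    (hA : ∀ N : Subrep M src tgt f, N ≠ bot → slope Θ σ N ≤ slope Θ σ A) :
    QuotSemistable Θ σ bot A := by
  intro N _ _ hN
  rw [quotSlope_bot, quotSlope_bot]
  exact hA N hN

/-- `0 ⊂ P 0 ⊂ P 1 ⊂ ⋯ ⊂ P s`, shifted by one and continued constantly by `P s`. -/
def prependBot (s : ℕ) (P : ℕ → Subrep M src tgt f) (i : ℕ) : Subrep M src tgt f :=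
  if i = 0 then bot else P (min (i - 1) s)

@[simp]
theorem prependBot_zero (s : ℕ) (P : ℕ → Subrep M src tgt f) : prependBot s P 0 = bot := rfl

theorem prependBot_succ {s j : ℕ} (P : ℕ → Subrep M src tgt f) (hj : j ≤ s) :
    prependBot s P (j + 1) = P j := by
  simp [prependBot, Nat.min_eq_left hj]

theorem prependBot_of_lt {s i : ℕ} (P : ℕ → Subrep M src tgt f) (hi : s < i) :
    prependBot s P i = P s := by
  simp [prependBot, Nat.ne_zero_of_lt hi, Nat.min_eq_right (Nat.le_sub_one_of_lt hi)]

end Subrep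

open Subrep in
theorem hn_concatenation_general {k V E : Type} [Field k] [Fintype V] {M : V → Type}
    [∀ v, AddCommGroup (M v)] [∀ v, Module k (M v)]
    {src tgt : E → V} {f : ∀ e, M (src e) →ₗ[k] M (tgt e)}
    (Θ σ : V → ℤ)
    (M₁ : Subrep M src tgt f) (hM₁ : M₁ ≠ bot)
    (hmaxslope : ∀ N : Subrep M src tgt f, N ≠ bot → slope Θ σ N ≤ slope Θ σ M₁)
    (s' : ℕ) (P : ℕ → Subrep M src tgt f)
    (hP0 : P 0 = M₁) (hPs : P s' = top)
    (hchain : ∀ j, j + 1 ≤ s' → P j < P (j + 1))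
    (hqslopes : ∀ j, j + 2 ≤ s' →
      quotSlope Θ σ (P (j + 1)) (P (j + 2)) < quotSlope Θ σ (P j) (P (j + 1)))
    (hqss : ∀ j, j + 1 ≤ s' → QuotSemistable Θ σ (P j) (P (j + 1)))
    (hfirst : quotSlope Θ σ M₁ (P 1) < slope Θ σ M₁) :
    IsHNFiltration Θ σ s'
      (fun i => if i = 0 then bot else P (min (i - 1) s')) := by
  change IsHNFiltration Θ σ s' (prependBot s' P)
  refine ⟨rfl, fun i hi => (prependBot_of_lt P hi).trans hPs, ?_, ?_, ?_⟩
  · rintro (_ | j) hj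
    · rw [prependBot_zero, prependBot_succ P (Nat.zero_le s'), hP0]
      exact bot_lt_of_ne_bot hM₁
    · rw [prependBot_succ P (by omega), prependBot_succ P (by omega)]
      exact hchain j hj
  · rintro (_ | j) hj
    · rw [prependBot_zero, prependBot_succ P (Nat.zero_le s'), prependBot_succ P hj, hP0,
        quotSlope_bot]
      exact hfirst
    · rw [prependBot_succ P (by omega), prependBot_succ P (by omega),
        prependBot_succ P (by omega)]
      exact hqslopes j hj
  · rintro (_ | j) hj
    · rw [prependBot_zero, prependBot_succ P hj, hP0]
      exact quotSemistable_bot_of_slope_le hmaxslope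
    · rw [prependBot_succ P (by omega), prependBot_succ P (by omega)]
      exact hqss j hj

open Subrep in
/-- Concatenation step of the HN recursion: if `M₁` is the maximal destabilizing
subrepresentation of `M` and `M₁ = P 0 ⊂ P 1 ⊂ ⋯ ⊂ P s = M` corresponds, under the
projection `π : M → M/M₁`, to a Harder–Narasimhan filtration of `M/M₁`, and
`μ(M₁) > μ(P 1/M₁)`, then `0 ⊂ M₁ ⊂ P 1 ⊂ ⋯ ⊂ M` is a Harder–Narasimhan filtration
of `M`. -/
theorem hn_concatenation {k V E : Type} [Field k] [Fintype V] {M : V → Type}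
    [∀ v, AddCommGroup (M v)] [∀ v, Module k (M v)] [∀ v, FiniteDimensional k (M v)]
    {src tgt : E → V} {f : ∀ e, M (src e) →ₗ[k] M (tgt e)}
    (Θ σ : V → ℤ) (hσ : ∀ v, 0 < σ v)
    (M₁ : Subrep M src tgt f) (hM₁ : M₁ ≠ bot) (hss : Semistable Θ σ M₁)
    (hmaxslope : ∀ N : Subrep M src tgt f, N ≠ bot → slope Θ σ N ≤ slope Θ σ M₁)
    (hmaxdim : ∀ N : Subrep M src tgt f, N ≠ bot → slope Θ σ N = slope Θ σ M₁ →
      tot σ N ≤ tot σ M₁)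
    (s' : ℕ) (hs' : 1 ≤ s') (P : ℕ → Subrep M src tgt f)
    (hP0 : P 0 = M₁) (hPs : P s' = top)
    (hchain : ∀ j, j + 1 ≤ s' → P j < P (j + 1))
    (hqslopes : ∀ j, j + 2 ≤ s' →
      quotSlope Θ σ (P (j + 1)) (P (j + 2)) < quotSlope Θ σ (P j) (P (j + 1)))
    (hqss : ∀ j, j + 1 ≤ s' → QuotSemistable Θ σ (P j) (P (j + 1)))
    (hfirst : quotSlope Θ σ M₁ (P 1) < slope Θ σ M₁) :
    IsHNFiltration Θ σ s'
      (fun i => if i = 0 then bot else P (min (i - 1) s')) :=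
  hn_concatenation_general Θ σ M₁ hM₁ hmaxslope s' P hP0 hPs hchain hqslopes hqss hfirst
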